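/- In Λ(2l), the triple Massey product ⟨α_{p₁}, β_{p₂}, α_{p₃}⟩ equals ((p₃−p₁)/(2(p₁+p₂+1)(p₂+p₃+1)))·[α_{p₁+p₂+p₃+1}]; in particular it is nonzero whenever p₁ ≠ p₃, so the free loop space LS^{2l} is not formal. -/

import Mathlib

/-! Both `α_p β_q` and `β_q α_p` equal `y₁ x₁ y₂^{p+q}`, which is the coboundary of
`-y₂^{p+q+1} / (2(p+q+1))`. Multiplying by an even power of `y₂` shifts `α`:
`y₂^n α_p = α_{n+p} + 2n · y₁ y₂^{n+p-1} x₂`. In the Massey representative the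
`y₁ y₂^{N-1} x₂` terms cancel, because `2(p+q+1)` times the coefficient of each bounding cochain
is `-1`, leaving `(p₃-p₁)/(2(p₁+p₂+1)(p₂+p₃+1)) · α_N`. This is not exact when `p₁ ≠ p₃`: `d` only
produces monomials containing `y₁` or `x₁²`, so no coboundary has an `x₁ y₂^N` component, whereas
`α_N` has coefficient `1` there. -/

namespace LoopSphereModel

noncomputable section

/-- Basis of the Sullivan model `Λ(2l) = Λ(y₁,x₁,y₂,x₂)` of the free loop space
`LS^{2l}`: `(e, a, p, f)` codes the monomial `y₁^e · x₁^a · y₂^p · x₂^f`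
(`e, f ∈ {0,1}` since `y₁, x₂` are odd; `x₁, y₂` are even). -/
abbrev Bas : Type := Bool × ℕ × ℕ × Bool

/-- The underlying ℚ-vector space of `Λ(2l)`. -/
abbrev Mod : Type := Bas →₀ ℚ

/-- The basis monomial `y₁^e x₁^a y₂^p x₂^f`. -/
def mon (b : Bas) : Mod := Finsupp.single b 1

/-- Degree of a basis monomial: `|y₁| = 2l-1`, `|x₁| = 2l`, `|y₂| = 4l-2`,
`|x₂| = 4l-1`. -/
def mdeg (l : ℕ) (b : Bas) : ℕ :=
  (if b.1 then 2 * l - 1 else 0) + b.2.1 * (2 * l) + b.2.2.1 * (4 * l - 2) +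
    (if b.2.2.2 then 4 * l - 1 else 0)

/-- The differential on basis monomials, obtained by extending
`dy₁ = dx₁ = 0`, `dx₂ = x₁²`, `dy₂ = -2x₁y₁` as a degree `+1` derivation:
`d(y₁^e x₁^a y₂^p x₂^f) = (-2p)·y₁ x₁^{a+1} y₂^{p-1} x₂^f` (only when `e = 0`)
`+ (-1)^e · y₁^e x₁^{a+2} y₂^p` (only when `f = 1`). -/
def dmon (b : Bas) : Mod :=
  (if b.1 then 0
    else (-(2 * (b.2.2.1 : ℚ))) • mon (true, b.2.1 + 1, b.2.2.1 - 1, b.2.2.2)) +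
  (if b.2.2.2 then
      (if b.1 then (-1 : ℚ) else 1) • mon (b.1, b.2.1 + 2, b.2.2.1, false)
    else 0)

/-- The differential of `Λ(2l)` as a linear map. -/
def dL : Mod →ₗ[ℚ] Mod :=
  Finsupp.lsum ℚ fun b => LinearMap.toSpanSingleton ℚ Mod (dmon b)

/-- Product of two basis monomials in the free graded-commutative algebra:
zero if an odd generator repeats, otherwise the reordered monomial with the
Koszul sign `(-1)^{e'·f}` (moving `y₁'` past `x₂^f`). -/
def monMul (b b' : Bas) : Mod :=
  if b.1 && b'.1 then 0
  else if b.2.2.2 && b'.2.2.2 then 0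
  else (if b'.1 && b.2.2.2 then (-1 : ℚ) else 1) •
    mon (b.1 || b'.1, b.2.1 + b'.2.1, b.2.2.1 + b'.2.2.1, b.2.2.2 || b'.2.2.2)

/-- The (graded-commutative) multiplication of `Λ(2l)`, extended bilinearly. -/
def mulF (x y : Mod) : Mod :=
  x.sum fun b c => y.sum fun b' c' => (c * c') • monMul b b'

/-- The cocycle `α_p := y₂^p x₁ - 2p · y₁ x₂ y₂^{p-1}`
(in canonical order `x₁ y₂^p - 2p · y₁ y₂^{p-1} x₂`). -/
def alphaEl (p : ℕ) : Mod :=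
  mon (false, 1, p, false) - (2 * (p : ℚ)) • mon (true, 0, p - 1, true)

/-- The cocycle `β_p := y₁ y₂^p`. -/
def betaEl (p : ℕ) : Mod := mon (true, 0, p, false)

def mulBilin : Mod →ₗ[ℚ] Mod →ₗ[ℚ] Mod :=
  Finsupp.lsum ℚ fun b => LinearMap.toSpanSingleton ℚ (Mod →ₗ[ℚ] Mod)
    (Finsupp.lsum ℚ fun b' => LinearMap.toSpanSingleton ℚ Mod (monMul b b'))

theorem mulF_eq_mulBilin (x y : Mod) : mulF x y = mulBilin x y := by
  simp only [mulF, mulBilin, Finsupp.lsum_apply, Finsupp.sum, LinearMap.sum_apply,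
    LinearMap.toSpanSingleton_apply, LinearMap.smul_apply, Finset.smul_sum, smul_smul]

theorem mulF_mon_mon (b b' : Bas) : mulF (mon b) (mon b') = monMul b b' := by
  simp [mulF_eq_mulBilin, mulBilin, mon]

theorem mulF_sub_left (x x' y : Mod) : mulF (x - x') y = mulF x y - mulF x' y := by
  simp only [mulF_eq_mulBilin, map_sub, LinearMap.sub_apply]

theorem mulF_sub_right (x y y' : Mod) : mulF x (y - y') = mulF x y - mulF x y' := by
  simp only [mulF_eq_mulBilin, map_sub]

theorem mulF_smul_left (c : ℚ) (x y : Mod) : mulF (c • x) y = c • mulF x y := by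
  simp only [mulF_eq_mulBilin, map_smul, LinearMap.smul_apply]

theorem mulF_smul_right (c : ℚ) (x y : Mod) : mulF x (c • y) = c • mulF x y := by
  simp only [mulF_eq_mulBilin, map_smul]

theorem dL_mon (b : Bas) : dL (mon b) = dmon b := by
  simp [dL, mon]

theorem dL_mon_y₂_pow_succ (n : ℕ) :
    dL (mon (false, 0, n + 1, false)) = (-(2 * ((n : ℚ) + 1))) • mon (true, 1, n, false) := by
  simp [dL_mon, dmon]

theorem mon_y₁x₁y₂_pow_eq_dL (n : ℕ) :
    mon (true, 1, n, false) =
      dL ((-(1 / (2 * ((n : ℚ) + 1)))) • mon (false, 0, n + 1, false)) := by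
  rw [map_smul, dL_mon_y₂_pow_succ, smul_smul]
  field_simp
  simp

theorem mulF_alphaEl_betaEl (p q : ℕ) :
    mulF (alphaEl p) (betaEl q) = mon (true, 1, p + q, false) := by
  simp [alphaEl, betaEl, mulF_sub_left, mulF_smul_left, mulF_mon_mon, monMul]

theorem mulF_betaEl_alphaEl (q p : ℕ) :
    mulF (betaEl q) (alphaEl p) = mon (true, 1, q + p, false) := by
  simp [alphaEl, betaEl, mulF_sub_right, mulF_smul_right, mulF_mon_mon, monMul]

theorem mulF_y₂_pow_alphaEl (n p : ℕ) :
    mulF (mon (false, 0, n, false)) (alphaEl p) =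
      alphaEl (n + p) + (2 * (n : ℚ)) • mon (true, 0, n + p - 1, true) := by
  rcases p with _ | p
  · simp [alphaEl, mulF_mon_mon, monMul]
  · simp [alphaEl, mulF_mon_mon, monMul, mulF_sub_right, mulF_smul_right]
    module

theorem mulF_alphaEl_y₂_pow (n p : ℕ) :
    mulF (alphaEl p) (mon (false, 0, n, false)) =
      alphaEl (p + n) + (2 * (n : ℚ)) • mon (true, 0, p + n - 1, true) := by
  rcases p with _ | p
  · simp [alphaEl, mulF_mon_mon, monMul]
  · simp [alphaEl, mulF_mon_mon, monMul, mulF_sub_left, mulF_smul_left]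
    module

theorem dL_apply_of_lt_two (s : Mod) {a : ℕ} (ha : a < 2) (p : ℕ) :
    dL s (false, a, p, false) = 0 := by
  rw [dL, Finsupp.lsum_apply, Finsupp.sum_apply]
  refine Finset.sum_eq_zero fun b _ => ?_
  rcases b with ⟨e, a, p, f⟩
  rcases e <;> rcases f <;>
    simp [dmon, mon, Finsupp.single_apply, Prod.ext_iff]; omega

theorem eq_zero_of_smul_alphaEl_eq_dL {c : ℚ} {N : ℕ} {s : Mod} (h : c • alphaEl N = dL s) :
    c = 0 := by
  simpa [alphaEl, mon, dL_apply_of_lt_two] using congrArg (· (false, 1, N, false)) h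

def boundingCochain (p q : ℕ) : Mod :=
  (-(1 / (2 * ((p : ℚ) + q + 1)))) • mon (false, 0, p + q + 1, false)

theorem mulF_alphaEl_betaEl_eq_dL (p q : ℕ) :
    mulF (alphaEl p) (betaEl q) = dL (boundingCochain p q) := by
  rw [mulF_alphaEl_betaEl, mon_y₁x₁y₂_pow_eq_dL, boundingCochain]
  push_cast
  rfl

theorem mulF_betaEl_alphaEl_eq_dL (p q : ℕ) :
    mulF (betaEl p) (alphaEl q) = dL (boundingCochain p q) := by
  rw [mulF_betaEl_alphaEl, mon_y₁x₁y₂_pow_eq_dL, boundingCochain]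
  push_cast
  rfl

theorem masseyRep_eq_smul_alphaEl (p₁ p₂ p₃ : ℕ) :
    -(mulF (boundingCochain p₁ p₂) (alphaEl p₃) - mulF (alphaEl p₁) (boundingCochain p₂ p₃)) =
      (((p₃ : ℚ) - p₁) / (2 * ((p₁ : ℚ) + p₂ + 1) * ((p₂ : ℚ) + p₃ + 1))) •
        alphaEl (p₁ + p₂ + p₃ + 1) := by
  rw [boundingCochain, boundingCochain, mulF_smul_left, mulF_smul_right, mulF_y₂_pow_alphaEl,
    mulF_alphaEl_y₂_pow, show p₁ + p₂ + 1 + p₃ = p₁ + p₂ + p₃ + 1 by omega,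
    show p₁ + (p₂ + p₃ + 1) = p₁ + p₂ + p₃ + 1 by omega]
  push_cast
  match_scalars <;> field_simp <;> ring

/-- Here `S = boundingCochain p₁ p₂` and `T = boundingCochain p₂ p₃`; since `|β_{p₂}|` is odd
and `|α_{p₁}|` even, the Massey representative is `-(S·α_{p₃} - α_{p₁}·T)`. -/
theorem massey_alpha_beta_alpha : ∀ p₁ p₂ p₃ : ℕ,
    mulF (alphaEl p₁) (betaEl p₂) =
      dL ((-(1 / (2 * ((p₁ : ℚ) + p₂ + 1)))) •
        mon (false, 0, p₁ + p₂ + 1, false)) ∧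
    mulF (betaEl p₂) (alphaEl p₃) =
      dL ((-(1 / (2 * ((p₂ : ℚ) + p₃ + 1)))) •
        mon (false, 0, p₂ + p₃ + 1, false)) ∧
    (∃ s,
      -(mulF ((-(1 / (2 * ((p₁ : ℚ) + p₂ + 1)))) •
            mon (false, 0, p₁ + p₂ + 1, false)) (alphaEl p₃) -
          mulF (alphaEl p₁)
            ((-(1 / (2 * ((p₂ : ℚ) + p₃ + 1)))) •
              mon (false, 0, p₂ + p₃ + 1, false))) =
        (((p₃ : ℚ) - p₁) / (2 * ((p₁ : ℚ) + p₂ + 1) * ((p₂ : ℚ) + p₃ + 1))) •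
            alphaEl (p₁ + p₂ + p₃ + 1) + dL s) ∧
    (p₁ ≠ p₃ →
      ¬ ∃ s,
        -(mulF ((-(1 / (2 * ((p₁ : ℚ) + p₂ + 1)))) •
              mon (false, 0, p₁ + p₂ + 1, false)) (alphaEl p₃) -
            mulF (alphaEl p₁)
              ((-(1 / (2 * ((p₂ : ℚ) + p₃ + 1)))) •
                mon (false, 0, p₂ + p₃ + 1, false))) = dL s) := by
  intro p₁ p₂ p₃
  have hrep := masseyRep_eq_smul_alphaEl p₁ p₂ p₃
  refine ⟨mulF_alphaEl_betaEl_eq_dL p₁ p₂, mulF_betaEl_alphaEl_eq_dL p₂ p₃,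
    ⟨0, by rw [map_zero, add_zero]; exact hrep⟩, fun hne ⟨s, hs⟩ => ?_⟩
  have hcoeff := eq_zero_of_smul_alphaEl_eq_dL (hrep.symm.trans hs)
  have hdiff : (p₃ : ℚ) - p₁ ≠ 0 := sub_ne_zero.mpr (by exact_mod_cast hne.symm)
  exact div_ne_zero hdiff (by positivity) hcoeff

end

end LoopSphereModel
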